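/- arXiv:1009.0125 — 3 statements merged into one kernel-verified Lean document; each statement's English description precedes it below -/
import Mathlib

section
/- Let K ⊆ ℝⁿ be compact and μ a finite Borel measure with supp μ = K. A continuous function f : ℝⁿ → ℝ is nonnegative on K if and only if ∫_K g² f dμ ≥ 0 for every polynomial g ∈ ℝ[x₁,…,xₙ]. -/
/-!
Polynomials are uniformly dense in `C(K, ℝ)` (Stone–Weierstrass), so by dominated convergence the
hypothesis extends to `∫_K u² f dμ ≥ 0` for every continuous `u`. For `u = min f 0` the integrand
`u² f = (min f 0)³` is nonpositive with nonnegative integral, hence vanishes `μ`-a.e.; so `f ≥ 0`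
`μ`-a.e., and the closed set `{f ≥ 0}` contains the support `K`.
-/

open MeasureTheory Filter Topology

/-- `K` is the support of `μ`: the smallest closed set whose complement is `μ`-null. -/
def IsMeasureSupport {X : Type*} [TopologicalSpace X] [MeasurableSpace X]
    (μ : Measure X) (K : Set X) : Prop :=
  IsClosed K ∧ μ Kᶜ = 0 ∧ ∀ F : Set X, IsClosed F → μ Fᶜ = 0 → K ⊆ F

namespace MvPolynomial

variable (σ R : Type*) [CommSemiring R] [TopologicalSpace R] [IsTopologicalSemiring R]

noncomputable def toContinuousMapAlgHom : MvPolynomial σ R →ₐ[R] C(σ → R, R) :=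
  aeval fun i ↦ ⟨fun x ↦ x i, continuous_apply i⟩

variable {σ R}

@[simp]
theorem toContinuousMapAlgHom_apply (p : MvPolynomial σ R) (x : σ → R) :
    toContinuousMapAlgHom σ R p x = eval x p := by
  induction p using MvPolynomial.induction_on with
  | C a => simp [toContinuousMapAlgHom]
  | add p q hp hq => simp [hp, hq]
  | mul_X p i hp => rw [map_mul, ContinuousMap.mul_apply, hp]; simp [toContinuousMapAlgHom]

end MvPolynomial

noncomputable def mvPolynomialFunctions (σ R : Type*) [CommSemiring R] [TopologicalSpace R]
    [IsTopologicalSemiring R] : Subalgebra R C(σ → R, R) :=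
  (MvPolynomial.toContinuousMapAlgHom σ R).range

theorem mvPolynomialFunctions_separatesPoints (σ R : Type*) [CommSemiring R] [TopologicalSpace R]
    [IsTopologicalSemiring R] : (mvPolynomialFunctions σ R).SeparatesPoints := by
  intro x y hxy
  obtain ⟨i, hi⟩ := Function.ne_iff.1 hxy
  exact ⟨_, ⟨_, ⟨MvPolynomial.X i, rfl⟩, rfl⟩, by simpa using hi⟩

theorem MvPolynomial.exists_near_continuous_of_isCompact {σ : Type*} {K : Set (σ → ℝ)}
    (hK : IsCompact K) (u : C(σ → ℝ, ℝ)) {ε : ℝ} (hε : 0 < ε) :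
    ∃ p : MvPolynomial σ ℝ, ∀ x ∈ K, |eval x p - u x| < ε := by
  obtain ⟨_, ⟨p, rfl⟩, hp⟩ :=
    ContinuousMap.exists_mem_subalgebra_near_continuous_of_isCompact_of_separatesPoints
      (mvPolynomialFunctions_separatesPoints σ ℝ) u hK hε
  exact ⟨p, by simpa using hp⟩

theorem setIntegral_sq_mul_nonneg_of_forall_mvPolynomial {ι : Type*} [Countable ι]
    {K : Set (ι → ℝ)} (hK : IsCompact K) {μ : Measure (ι → ℝ)} [IsFiniteMeasureOnCompacts μ]
    {f : (ι → ℝ) → ℝ} (hf : Continuous f)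
    (h : ∀ g : MvPolynomial ι ℝ, 0 ≤ ∫ x in K, MvPolynomial.eval x g ^ 2 * f x ∂μ)
    (u : C(ι → ℝ, ℝ)) : 0 ≤ ∫ x in K, u x ^ 2 * f x ∂μ := by
  choose p hp using fun k : ℕ ↦
    MvPolynomial.exists_near_continuous_of_isCompact hK u (Nat.one_div_pos_of_nat (n := k))
  have hp_tendsto : ∀ x ∈ K, Tendsto (fun k ↦ MvPolynomial.eval x (p k)) atTop (𝓝 (u x)) :=
    fun x hx ↦ tendsto_iff_norm_sub_tendsto_zero.2 <| squeeze_zero (fun _ ↦ norm_nonneg _)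
      (fun k ↦ (hp k x hx).le) tendsto_one_div_add_atTop_nhds_zero_nat
  have hp_bound : ∀ k, ∀ x ∈ K, |MvPolynomial.eval x (p k)| ≤ |u x| + 1 := by
    intro k x hx
    have hk : 1 / ((k : ℝ) + 1) ≤ 1 := div_le_one_of_le₀ (by simp) (by positivity)
    linarith [hp k x hx, abs_sub_abs_le_abs_sub (MvPolynomial.eval x (p k)) (u x)]
  refine ge_of_tendsto' (tendsto_integral_of_dominated_convergence
    (fun x ↦ (|u x| + 1) ^ 2 * |f x|) (fun k ↦ ?_) ?_ (fun k ↦ ?_) ?_) fun k ↦ h (p k)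
  · exact (((MvPolynomial.continuous_eval _).pow 2).mul hf).aestronglyMeasurable
  · exact (((u.continuous.abs.add continuous_const).pow 2).mul hf.abs).continuousOn
      |>.integrableOn_compact hK
  · refine ae_restrict_of_forall_mem hK.measurableSet fun x hx ↦ ?_
    rw [norm_mul, norm_pow, Real.norm_eq_abs, Real.norm_eq_abs]
    gcongr
    exact hp_bound k x hx
  · exact ae_restrict_of_forall_mem hK.measurableSet fun x hx ↦
      ((hp_tendsto x hx).pow 2).mul_const _

theorem IsMeasureSupport.subset_of_ae_mem {X : Type*} [TopologicalSpace X] [MeasurableSpace X]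
    {μ : Measure X} {K F : Set X} (hsupp : IsMeasureSupport μ K) (hF : IsClosed F)
    (h : ∀ᵐ x ∂μ, x ∈ F) : K ⊆ F :=
  hsupp.2.2 F hF (ae_iff.1 h)

theorem IsMeasureSupport.restrict_eq_self {X : Type*} [TopologicalSpace X] [MeasurableSpace X]
    {μ : Measure X} {K : Set X} (hsupp : IsMeasureSupport μ K) : μ.restrict K = μ :=
  Measure.restrict_eq_self_of_ae_mem (mem_ae_iff.2 hsupp.2.1)

theorem min_zero_sq_mul_self_nonpos (t : ℝ) : min t 0 ^ 2 * t ≤ 0 := by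
  rcases le_total 0 t with ht | ht
  · simp [ht]
  · exact mul_nonpos_of_nonneg_of_nonpos (sq_nonneg _) ht

theorem min_zero_sq_mul_self_eq_zero_iff (t : ℝ) : min t 0 ^ 2 * t = 0 ↔ 0 ≤ t := by
  rcases le_or_gt 0 t with ht | ht
  · simp [ht]
  · simp [min_eq_left ht.le, ht.ne, ht.not_ge]

theorem IsMeasureSupport.nonneg_of_forall_setIntegral_sq_mul_nonneg {X : Type*}
    [TopologicalSpace X] [MeasurableSpace X] [OpensMeasurableSpace X] {μ : Measure X}
    [IsFiniteMeasureOnCompacts μ] {K : Set X} (hsupp : IsMeasureSupport μ K) (hK : IsCompact K)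
    {f : X → ℝ} (hf : Continuous f) (h : ∀ u : C(X, ℝ), 0 ≤ ∫ x in K, u x ^ 2 * f x ∂μ) :
    ∀ x ∈ K, 0 ≤ f x := by
  set φ : X → ℝ := fun x ↦ min (f x) 0 ^ 2 * f x
  have hφ_nonpos : φ ≤ 0 := fun x ↦ min_zero_sq_mul_self_nonpos (f x)
  have hφ_int : IntegrableOn φ K μ :=
    (((hf.min continuous_const).pow 2).mul hf).continuousOn.integrableOn_compact' hK
      hsupp.1.measurableSet
  have hφ_integral : ∫ x in K, φ x ∂μ = 0 :=
    le_antisymm (integral_nonpos hφ_nonpos) (h ⟨fun x ↦ min (f x) 0, hf.min continuous_const⟩)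
  have hφ_zero : -φ =ᵐ[μ.restrict K] 0 := by
    refine (integral_eq_zero_iff_of_nonneg (neg_nonneg.2 hφ_nonpos) hφ_int.neg).1 ?_
    simp only [Pi.neg_apply, integral_neg, hφ_integral, neg_zero]
  rw [hsupp.restrict_eq_self] at hφ_zero
  refine hsupp.subset_of_ae_mem (isClosed_le continuous_const hf) ?_
  filter_upwards [hφ_zero] with x hx
  exact (min_zero_sq_mul_self_eq_zero_iff _).1 (neg_eq_zero.1 hx)

theorem stmt3 {n : ℕ} (K : Set (Fin n → ℝ)) (hK : IsCompact K)
    (μ : Measure (Fin n → ℝ)) [IsFiniteMeasure μ] (hsupp : IsMeasureSupport μ K)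
    (f : (Fin n → ℝ) → ℝ) (hf : Continuous f) :
    (∀ x ∈ K, 0 ≤ f x) ↔
      ∀ g : MvPolynomial (Fin n) ℝ,
        0 ≤ ∫ x in K, (MvPolynomial.eval x g) ^ 2 * f x ∂μ :=
  ⟨fun h _ ↦ setIntegral_nonneg hK.measurableSet fun x hx ↦ mul_nonneg (sq_nonneg _) (h x hx),
    fun h ↦ hsupp.nonneg_of_forall_setIntegral_sq_mul_nonneg hK hf
      (setIntegral_sq_mul_nonneg_of_forall_mvPolynomial hK hf h)⟩
end

section
/- Let K ⊆ ℝⁿ be compact, μ a finite Borel measure with supp μ = K, and f continuous on ℝⁿ. If f is concave and ∫_K g² f dμ ≥ 0 for all polynomials g, then f is nonnegative on the convex hull of K. -/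
/-!
First `f ≥ 0` on `K`: if `f x₀ < 0` for some `x₀ ∈ K`, take `p = C - ∑ (xᵢ - x₀ᵢ)²` with `C ≥ max_K ∑ (xᵢ - x₀ᵢ)²`.
Then `p ≥ 0` on `K`, `p` is largest near `x₀`, where `f < 0`, and the support hypothesis gives the
neighbourhood of `x₀` positive mass, so `∫_K p^(2k) f dμ < 0` for large `k`, against the hypothesis
for `g = p^k`. Concavity then spreads nonnegativity from `K` to its convex hull.
-/

open MeasureTheory Filter Topology

namespace IsMeasureSupport

variable {X : Type*} [TopologicalSpace X] [MeasurableSpace X] {μ : Measure X} {K : Set X}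

theorem restrict_eq_self_s4 (h : IsMeasureSupport μ K) : μ.restrict K = μ :=
  Measure.restrict_eq_self_of_ae_mem (mem_ae_iff.2 h.2.1)

theorem measure_pos_of_isOpen (h : IsMeasureSupport μ K) {U : Set X} (hU : IsOpen U)
    (hUK : (U ∩ K).Nonempty) : 0 < μ U := by
  obtain ⟨x, hxU, hxK⟩ := hUK
  refine pos_iff_ne_zero.2 fun h0 => ?_
  exact h.2.2 Uᶜ hU.isClosed_compl (by rwa [compl_compl]) hxK hxU

end IsMeasureSupport

theorem dist_lt_of_sum_sq_lt {ι : Type*} [Fintype ι] {x y : ι → ℝ} {r : ℝ} (hr : 0 < r)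
    (h : ∑ i, (x i - y i) ^ 2 < r ^ 2) : dist x y < r := by
  refine (dist_pi_lt_iff hr).2 fun i => ?_
  rw [Real.dist_eq]
  refine abs_lt_of_sq_lt_sq (lt_of_le_of_lt ?_ h) hr.le
  exact Finset.single_le_sum (f := fun i => (x i - y i) ^ 2) (fun i _ => sq_nonneg _)
    (Finset.mem_univ i)

theorem pow_mul_le_ite_add {t u a b ε M : ℝ} (m : ℕ) (hb : 0 ≤ b) (hba : b < a) (ht : 0 ≤ t)
    (huM : |u| ≤ M) (huε : b < t → u ≤ -ε) (hε : 0 ≤ ε) :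
    t ^ m * u ≤ (if a ≤ t then -(ε * a ^ m) else 0) + M * b ^ m := by
  have hM : 0 ≤ M := (abs_nonneg u).trans huM
  rcases le_or_gt t b with htb | hbt
  · rw [if_neg (htb.trans_lt hba).not_ge, zero_add]
    calc t ^ m * u ≤ t ^ m * M := mul_le_mul_of_nonneg_left (le_of_abs_le huM) (by positivity)
      _ ≤ M * b ^ m := by rw [mul_comm]; gcongr
  have hu := huε hbt
  have hbm : 0 ≤ M * b ^ m := by positivity
  split_ifs with hat
  · have : a ^ m ≤ t ^ m := pow_le_pow_left₀ (hb.trans hba.le) hat m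
    nlinarith [pow_nonneg (hb.trans hba.le) m]
  · nlinarith [pow_nonneg ht m]

theorem eventually_integral_pow_mul_neg {X : Type*} [MeasurableSpace X] {ν : Measure X}
    [IsFiniteMeasure ν] {p f : X → ℝ} {a b ε M : ℝ} (hp_meas : Measurable p) (hb : 0 ≤ b)
    (hba : b < a) (hε : 0 < ε) (hp : ∀ᵐ x ∂ν, 0 ≤ p x) (hfM : ∀ᵐ x ∂ν, |f x| ≤ M)
    (hfε : ∀ x, b < p x → f x ≤ -ε) (hA : 0 < ν {x | a ≤ p x})
    (hint : ∀ m, Integrable (fun x => p x ^ m * f x) ν) :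
    ∀ᶠ m in atTop, ∫ x, p x ^ m * f x ∂ν < 0 := by
  set A := {x | a ≤ p x}
  have hAm : MeasurableSet A := measurableSet_le measurable_const hp_meas
  have ha : 0 < a := hb.trans_lt hba
  have hcA : 0 < ν.real A := ENNReal.toReal_pos hA.ne' (measure_ne_top ν A)
  have hbound : ∀ m : ℕ, ∫ x, p x ^ m * f x ∂ν
      ≤ -(ε * a ^ m) * ν.real A + M * b ^ m * ν.real Set.univ := by
    intro m
    have hind : Integrable (A.indicator fun _ => -(ε * a ^ m)) ν :=
      (integrable_const _).indicator hAm
    calc ∫ x, p x ^ m * f x ∂ν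
        ≤ ∫ x, (A.indicator (fun _ => -(ε * a ^ m)) x + M * b ^ m) ∂ν := by
          refine integral_mono_ae (hint m) (hind.add (integrable_const _)) ?_
          filter_upwards [hp, hfM] with x hpx hfx
          simpa only [Set.indicator_apply, Set.mem_ofPred_eq, A] using
            pow_mul_le_ite_add m hb hba hpx hfx (hfε x) hε.le
      _ = _ := by
          rw [integral_add hind (integrable_const _), integral_indicator_const _ hAm,
            integral_const, smul_eq_mul, smul_eq_mul]
          ring
  -- `b ^ m = (b / a) ^ m * a ^ m`, and `(b / a) ^ m → 0`.
  have hlim : Tendsto (fun m : ℕ => M * ν.real Set.univ * (b / a) ^ m) atTop (𝓝 0) := by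
    simpa using (tendsto_pow_atTop_nhds_zero_of_lt_one (div_nonneg hb ha.le)
      ((div_lt_one ha).2 hba)).const_mul (M * ν.real Set.univ)
  filter_upwards [hlim.eventually (gt_mem_nhds (mul_pos hε hcA))] with m hm
  have ham : 0 < a ^ m := pow_pos ha m
  have hsplit : M * ν.real Set.univ * (b / a) ^ m * a ^ m = M * b ^ m * ν.real Set.univ := by
    rw [div_pow]; field_simp
  nlinarith [hbound m, mul_lt_mul_of_pos_right hm ham]

theorem nonneg_of_mem_of_integral_sq_mul_nonneg {n : ℕ} {K : Set (Fin n → ℝ)} (hK : IsCompact K)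
    {μ : Measure (Fin n → ℝ)} [IsFiniteMeasure μ] (hsupp : IsMeasureSupport μ K)
    {f : (Fin n → ℝ) → ℝ} (hf : Continuous f)
    (hpos : ∀ g : MvPolynomial (Fin n) ℝ, 0 ≤ ∫ x in K, (MvPolynomial.eval x g) ^ 2 * f x ∂μ) :
    ∀ x ∈ K, 0 ≤ f x := by
  intro x₀ hx₀
  by_contra! hneg
  set ε := -f x₀ / 2 with hε_def
  have hε : 0 < ε := by linarith
  obtain ⟨r, hr, hrf⟩ := Metric.continuous_iff.mp hf x₀ ε hε
  set q : MvPolynomial (Fin n) ℝ := ∑ i, (.X i - .C (x₀ i)) ^ 2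
  set Q := fun x => MvPolynomial.eval x q
  have hQ_cont : Continuous Q := MvPolynomial.continuous_eval q
  have hfε : ∀ x, Q x < r ^ 2 → f x ≤ -ε := fun x hx => by
    have := hrf x (dist_lt_of_sum_sq_lt hr (by simpa [Q, q] using hx))
    rw [Real.dist_eq, abs_lt] at this
    linarith
  obtain ⟨S, hS⟩ := hK.bddAbove_image hQ_cont.continuousOn
  obtain ⟨M, hM⟩ := hK.exists_bound_of_continuousOn hf.continuousOn
  set C := max S (r ^ 2)
  set P := MvPolynomial.C C - q
  have hP : ∀ x, MvPolynomial.eval x P = C - Q x := by simp [P, Q]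
  have hK_ae : ∀ᵐ x ∂μ, x ∈ K := mem_ae_iff.2 hsupp.2.1
  have hA : 0 < μ {x | C - r ^ 2 / 2 ≤ MvPolynomial.eval x P} := by
    refine lt_of_lt_of_le (hsupp.measure_pos_of_isOpen (isOpen_lt hQ_cont continuous_const)
      ⟨x₀, by simp [Q, q, hr], hx₀⟩) (measure_mono fun x (hx : Q x < r ^ 2 / 2) => ?_)
    simp only [Set.mem_ofPred_eq, hP]
    linarith
  have hint : ∀ m, Integrable (fun x => MvPolynomial.eval x P ^ m * f x) μ := fun m => by
    rw [← hsupp.restrict_eq_self_s4]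
    exact (((MvPolynomial.continuous_eval P).pow m).mul hf).continuousOn.integrableOn_compact hK
  obtain ⟨k, hk⟩ := (eventually_integral_pow_mul_neg (MvPolynomial.continuous_eval P).measurable
    (sub_nonneg.2 (le_max_right S (r ^ 2))) (by linarith [pow_pos hr 2]) hε
    (hK_ae.mono fun x hx => by
      rw [hP]; exact sub_nonneg.2 ((hS ⟨x, hx, rfl⟩).trans (le_max_left _ _)))
    (hK_ae.mono fun x hx => by simpa using hM x hx)
    (fun x hx => hfε x (by rw [hP] at hx; linarith)) hA hint).exists_forall_of_atTop
  have := hpos (P ^ k)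
  rw [hsupp.restrict_eq_self_s4] at this
  simp only [map_pow, ← pow_mul] at this
  exact (hk (k * 2) (by omega)).not_ge this

theorem stmt4 {n : ℕ} (K : Set (Fin n → ℝ)) (hK : IsCompact K)
    (μ : Measure (Fin n → ℝ)) [IsFiniteMeasure μ] (hsupp : IsMeasureSupport μ K)
    (f : (Fin n → ℝ) → ℝ) (hf : Continuous f)
    (hconc : ConcaveOn ℝ Set.univ f)
    (hpos : ∀ g : MvPolynomial (Fin n) ℝ,
      0 ≤ ∫ x in K, (MvPolynomial.eval x g) ^ 2 * f x ∂μ) :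
    ∀ x ∈ convexHull ℝ K, 0 ≤ f x := by
  intro x hx
  obtain ⟨y, hyK, hle⟩ := hconc.exists_le_of_mem_convexHull (Set.subset_univ K) hx
  exact (nonneg_of_mem_of_integral_sq_mul_nonneg hK hsupp hf hpos y hyK).trans hle
end

section
/- Let K ⊆ ℝⁿ be closed, μ a finite Borel measure with supp μ = K and all moments y = (y_α) finite; assume also that for any sequence z with all moment matrices M_d(z) ⪰ 0 and Carleman-type bounds |z-moments| ≤ c·(2k)!, positivity of localizing matrices M_d(f y) for all d implies f ≥ 0 on K (Theorem: nonnegativity characterization). Consider a polynomial f ∈ ℝ[x] and the hierarchy λ_d = sup{λ ∈ ℝ : M_d((f−λ) y) ⪰ 0}. Then λ_d ≥ f* := inf{f(x) : x ∈ K} for every d, the sequence (λ_d) is nonincreasing, and λ_d ↓ f* as d → ∞. -/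
open MeasureTheory

/-- The localizing matrix `M_d(g y)` of `g` w.r.t. the moments `y` of `μ` is positive
semidefinite, expressed via its quadratic form on coefficient vectors of polynomials of
degree at most `d`. -/
def LocPSD {n : ℕ} (μ : Measure (Fin n → ℝ)) (d : ℕ) (g : MvPolynomial (Fin n) ℝ) : Prop :=
  ∀ p : MvPolynomial (Fin n) ℝ, p.totalDegree ≤ d →
    0 ≤ ∑ α ∈ p.support, ∑ β ∈ p.support, p.coeff α * p.coeff β *
        (∑ γ ∈ g.support, g.coeff γ * ∫ x, ∏ i, (x i) ^ ((α + β + γ) i) ∂μ)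


/-!
Through `∫ p² g dμ`, the condition `LocPSD μ d g` is a convex cone in `g` that contains every
polynomial nonnegative on `supp μ`, and it weakens as `d` decreases. Hence `f - f*` is feasible at
every level and the feasible sets shrink with `d`, which gives `f* ≤ λ_d` and monotonicity. Each
`c` below `lim λ_d` is feasible at all levels, so the characterization gives `f ≥ c` on `K`, that
is `c ≤ f*`.
-/

open MvPolynomial

def HasFiniteMoments {σ : Type*} [Fintype σ] (μ : Measure (σ → ℝ)) : Prop :=
  ∀ s : σ →₀ ℕ, Integrable (fun x => ∏ i, (x i) ^ (s i)) μ

section Moments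

variable {σ : Type*} [Fintype σ] {μ : Measure (σ → ℝ)}

theorem HasFiniteMoments.integrable_eval (hmom : HasFiniteMoments μ) (q : MvPolynomial σ ℝ) :
    Integrable (fun x => eval x q) μ := by
  simp only [eval_eq']
  exact integrable_finsetSum _ fun s _ => (hmom s).const_mul _

theorem eval_sq_mul_eval_eq_sum (x : σ → ℝ) (p g : MvPolynomial σ ℝ) :
    eval x p ^ 2 * eval x g = ∑ α ∈ p.support, ∑ β ∈ p.support, ∑ γ ∈ g.support,
      p.coeff α * p.coeff β * g.coeff γ * ∏ i, (x i) ^ ((α + β + γ) i) := by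
  rw [sq, eval_eq' x p, eval_eq' x g, Finset.sum_mul_sum, Finset.sum_mul]
  refine Finset.sum_congr rfl fun α _ => ?_
  rw [Finset.sum_mul]
  refine Finset.sum_congr rfl fun β _ => ?_
  rw [Finset.mul_sum]
  refine Finset.sum_congr rfl fun γ _ => ?_
  simp only [Finsupp.coe_add, Pi.add_apply, pow_add, Finset.prod_mul_distrib]
  ring

theorem HasFiniteMoments.localizingForm_eq_integral (hmom : HasFiniteMoments μ)
    (g p : MvPolynomial σ ℝ) :
    ∑ α ∈ p.support, ∑ β ∈ p.support, p.coeff α * p.coeff β *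
        (∑ γ ∈ g.support, g.coeff γ * ∫ x, ∏ i, (x i) ^ ((α + β + γ) i) ∂μ)
      = ∫ x, eval x p ^ 2 * eval x g ∂μ := by
  have hint : ∀ α β γ : σ →₀ ℕ, Integrable
      (fun x => p.coeff α * p.coeff β * g.coeff γ * ∏ i, (x i) ^ ((α + β + γ) i)) μ :=
    fun α β γ => (hmom _).const_mul _
  simp_rw [eval_sq_mul_eval_eq_sum]
  rw [integral_finsetSum _ fun α _ => integrable_finsetSum _ fun β _ =>
    integrable_finsetSum _ fun γ _ => hint α β γ]
  refine Finset.sum_congr rfl fun α _ => ?_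
  rw [integral_finsetSum _ fun β _ => integrable_finsetSum _ fun γ _ => hint α β γ]
  refine Finset.sum_congr rfl fun β _ => ?_
  rw [integral_finsetSum _ fun γ _ => hint α β γ, Finset.mul_sum]
  refine Finset.sum_congr rfl fun γ _ => ?_
  rw [integral_const_mul]
  ring

end Moments

section LocalizingMatrix

variable {n : ℕ} {μ : Measure (Fin n → ℝ)} {d : ℕ}

theorem locPSD_iff (hmom : HasFiniteMoments μ) {g : MvPolynomial (Fin n) ℝ} :
    LocPSD μ d g ↔ ∀ p : MvPolynomial (Fin n) ℝ, p.totalDegree ≤ d →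
      0 ≤ ∫ x, eval x p ^ 2 * eval x g ∂μ := by
  simp only [LocPSD, hmom.localizingForm_eq_integral]

theorem LocPSD.mono {d' : ℕ} {g : MvPolynomial (Fin n) ℝ} (hdd' : d ≤ d')
    (h : LocPSD μ d' g) : LocPSD μ d g :=
  fun p hp => h p (hp.trans hdd')

theorem locPSD_of_ae_nonneg (hmom : HasFiniteMoments μ) {g : MvPolynomial (Fin n) ℝ}
    (hg : ∀ᵐ x ∂μ, 0 ≤ eval x g) (d : ℕ) : LocPSD μ d g :=
  (locPSD_iff hmom).2 fun _ _ =>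
    integral_nonneg_of_ae <| hg.mono fun _ hx => mul_nonneg (sq_nonneg _) hx

theorem LocPSD.add (hmom : HasFiniteMoments μ) {g h : MvPolynomial (Fin n) ℝ}
    (hg : LocPSD μ d g) (hh : LocPSD μ d h) : LocPSD μ d (g + h) := by
  rw [locPSD_iff hmom] at hg hh ⊢
  intro p hp
  have hint : ∀ q, Integrable (fun x => eval x p ^ 2 * eval x q) μ := fun q => by
    convert hmom.integrable_eval (p ^ 2 * q) using 2
    simp
  simp only [map_add, mul_add]
  rw [integral_add (hint g) (hint h)]
  exact add_nonneg (hg p hp) (hh p hp)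

theorem isLowerSet_setOf_locPSD_sub_C (hmom : HasFiniteMoments μ) (f : MvPolynomial (Fin n) ℝ) :
    IsLowerSet {t : ℝ | LocPSD μ d (f - C t)} := by
  intro t t' htt' ht
  have hC : LocPSD μ d (C (t - t')) :=
    locPSD_of_ae_nonneg hmom (.of_forall fun _ => by simpa using htt') d
  simpa using ht.add hmom hC

end LocalizingMatrix

theorem forall_eval_sub_C_nonneg_iff {σ : Type*} {K : Set (σ → ℝ)} {f : MvPolynomial σ ℝ}
    {c : ℝ} : (∀ x ∈ K, 0 ≤ eval x (f - C c)) ↔ c ∈ lowerBounds ((fun x => eval x f) '' K) := by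
  simp [lowerBounds]

theorem stmt14_general {n : ℕ} (K : Set (Fin n → ℝ))
    (μ : Measure (Fin n → ℝ)) (hsupp : IsMeasureSupport μ K)
    (hmom : ∀ σ : Fin n →₀ ℕ, Integrable (fun x => ∏ i, (x i) ^ (σ i)) μ)
    (hchar : ∀ g : MvPolynomial (Fin n) ℝ,
      (∀ d, LocPSD μ d g) → ∀ x ∈ K, 0 ≤ MvPolynomial.eval x g)
    (f : MvPolynomial (Fin n) ℝ) (fstar : ℝ)
    (hfstar : IsGLB ((fun x => MvPolynomial.eval x f) '' K) fstar)
    (lam : ℕ → ℝ)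
    (hlam : ∀ d, IsLUB {t : ℝ | LocPSD μ d (f - MvPolynomial.C t)} (lam d)) :
    (∀ d, fstar ≤ lam d) ∧ Antitone lam ∧
      Filter.Tendsto lam Filter.atTop (nhds fstar) := by
  have hae_K : ∀ᵐ x ∂μ, x ∈ K := mem_ae_iff.2 hsupp.2.1
  have hfeas : ∀ d, LocPSD μ d (f - C fstar) := locPSD_of_ae_nonneg hmom <|
    hae_K.mono fun x hx => forall_eval_sub_C_nonneg_iff.2 hfstar.1 x hx
  have hge : ∀ d, fstar ≤ lam d := fun d => (hlam d).1 (hfeas d)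
  have hanti : Antitone lam := antitone_nat_of_succ_le fun d =>
    (hlam (d + 1)).mono (hlam d) fun _ ht => ht.mono d.le_succ
  have hbdd : BddBelow (Set.range lam) := ⟨fstar, Set.forall_mem_range.2 hge⟩
  suffices hinf : ⨅ d, lam d = fstar from ⟨hge, hanti, hinf ▸ tendsto_atTop_ciInf hanti hbdd⟩
  refine le_antisymm (le_of_forall_lt_imp_le_of_dense fun c hc => ?_) (le_ciInf hge)
  have hc_feas : ∀ d, LocPSD μ d (f - C c) := fun d => by
    obtain ⟨t, ht, hct, -⟩ := (hlam d).exists_between (hc.trans_le (ciInf_le hbdd d))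
    exact isLowerSet_setOf_locPSD_sub_C hmom f hct.le ht
  exact hfstar.2 (forall_eval_sub_C_nonneg_iff.1 (hchar _ hc_feas))

theorem stmt14 {n : ℕ} (K : Set (Fin n → ℝ)) (hKcl : IsClosed K) (hKne : K.Nonempty)
    (μ : Measure (Fin n → ℝ)) [IsFiniteMeasure μ] (hsupp : IsMeasureSupport μ K)
    (hmom : ∀ σ : Fin n →₀ ℕ, Integrable (fun x => ∏ i, (x i) ^ (σ i)) μ)
    (hchar : ∀ g : MvPolynomial (Fin n) ℝ,
      (∀ d, LocPSD μ d g) → ∀ x ∈ K, 0 ≤ MvPolynomial.eval x g)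
    (f : MvPolynomial (Fin n) ℝ) (fstar : ℝ)
    (hfstar : IsGLB ((fun x => MvPolynomial.eval x f) '' K) fstar)
    (lam : ℕ → ℝ)
    (hlam : ∀ d, IsLUB {t : ℝ | LocPSD μ d (f - MvPolynomial.C t)} (lam d)) :
    (∀ d, fstar ≤ lam d) ∧ Antitone lam ∧
      Filter.Tendsto lam Filter.atTop (nhds fstar) :=
  stmt14_general K μ hsupp hmom hchar f fstar hfstar lam hlam
end
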